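/- Let E be a real Banach lattice and let T : E → E be a positive bounded linear operator which is mean ergodic with mean ergodic projection 0, i.e. the Cesàro means (1/n) · Σ_{k=0}^{n-1} T^k x converge in norm to 0 for every x ∈ E. Then for every integer m ≥ 1 the power T^m is also mean ergodic with mean ergodic projection 0, i.e. (1/n) · Σ_{k=0}^{n-1} (T^m)^k x converges in norm to 0 for every x ∈ E. -/

import Mathlib

/-!
For `x ≥ 0` and positive `T`, the orbit sum `∑_{k<n} T^{mk} x` is a sub-sum of
`∑_{j<mn} T^j x` with nonnegative terms, so `0 ≤ A_n(T^m) x ≤ m • A_{mn}(T) x` for the Cesàro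
means `A_n`; since the norm is solid, the right-hand side going to `0` forces the left-hand side
to `0`. A general `x` is `x⁺ - x⁻`, and the Cesàro means are linear.
-/

open Filter Topology Finset

theorem tendsto_apply_of_tendsto_apply_nonneg {ι E F G : Type*} [AddCommGroup E] [Lattice E]
    [IsOrderedAddMonoid E] [AddCommGroup F] [TopologicalSpace F] [IsTopologicalAddGroup F]
    [FunLike G E F] [AddMonoidHomClass G E F] {l : Filter ι} (A : ι → G)
    (h : ∀ x, 0 ≤ x → Tendsto (fun i => A i x) l (𝓝 0)) (x : E) :
    Tendsto (fun i => A i x) l (𝓝 0) := by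
  have hsub := (h _ (posPart_nonneg x)).sub (h _ (negPart_nonneg x))
  rw [sub_zero] at hsub
  exact hsub.congr fun i => by rw [← map_sub, posPart_sub_negPart]

theorem tendsto_zero_of_nonneg_of_le {ι α : Type*} [NormedAddCommGroup α] [Lattice α]
    [IsOrderedAddMonoid α] [HasSolidNorm α] {l : Filter ι} {f g : ι → α}
    (hf : ∀ i, 0 ≤ f i) (hfg : ∀ i, f i ≤ g i) (hg : Tendsto g l (𝓝 0)) :
    Tendsto f l (𝓝 0) := by
  refine squeeze_zero_norm (fun i => norm_le_norm_of_abs_le_abs ?_)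
    (tendsto_zero_iff_norm_tendsto_zero.1 hg)
  rw [abs_of_nonneg (hf i), abs_of_nonneg ((hf i).trans (hfg i))]
  exact hfg i

theorem sum_range_comp_mul_le {M : Type*} [AddCommMonoid M] [PartialOrder M]
    [IsOrderedAddMonoid M] {f : ℕ → M} (hf : ∀ j, 0 ≤ f j) {m : ℕ} (hm : 0 < m) (n : ℕ) :
    ∑ k ∈ range n, f (m * k) ≤ ∑ j ∈ range (m * n), f j := by
  rw [← sum_image (f := f) fun a _ b _ h => Nat.eq_of_mul_eq_mul_left hm h]
  refine sum_le_sum_of_subset_of_nonneg (fun j hj => ?_) fun j _ _ => hf j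
  obtain ⟨k, hk, rfl⟩ := mem_image.1 hj
  exact mem_range.2 (Nat.mul_lt_mul_of_pos_left (mem_range.1 hk) hm)

theorem ContinuousLinearMap.pow_apply_nonneg {R M : Type*} [Semiring R] [TopologicalSpace M]
    [AddCommMonoid M] [Module R M] [Preorder M] {T : M →L[R] M}
    (hT : ∀ x, 0 ≤ x → 0 ≤ T x) (k : ℕ) {x : M} (hx : 0 ≤ x) : 0 ≤ (T ^ k) x := by
  induction k with
  | zero => exact hx
  | succ k ih => rw [pow_succ']; exact hT _ ih

section CesaroMean

variable {E : Type*} [NormedAddCommGroup E] [NormedSpace ℝ E]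

noncomputable def cesaroMean (T : E →L[ℝ] E) (n : ℕ) : E →L[ℝ] E :=
  (n : ℝ)⁻¹ • ∑ k ∈ range n, T ^ k

@[simp]
theorem cesaroMean_apply (T : E →L[ℝ] E) (n : ℕ) (x : E) :
    cesaroMean T n x = (n : ℝ)⁻¹ • ∑ k ∈ range n, (T ^ k) x := by
  simp [cesaroMean]

variable [Lattice E] [IsOrderedAddMonoid E] [PosSMulMono ℝ E] {T : E →L[ℝ] E}

theorem cesaroMean_apply_nonneg (hT : ∀ x, 0 ≤ x → 0 ≤ T x) (n : ℕ) {x : E} (hx : 0 ≤ x) :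
    0 ≤ cesaroMean T n x := by
  rw [cesaroMean_apply]
  exact smul_nonneg (by positivity) (sum_nonneg fun k _ => T.pow_apply_nonneg hT k hx)

theorem cesaroMean_pow_apply_le (hT : ∀ x, 0 ≤ x → 0 ≤ T x) {m : ℕ} (hm : 0 < m) (n : ℕ)
    {x : E} (hx : 0 ≤ x) : cesaroMean (T ^ m) n x ≤ (m : ℝ) • cesaroMean T (m * n) x := by
  have hsum : ∑ k ∈ range n, ((T ^ m) ^ k) x ≤ ∑ j ∈ range (m * n), (T ^ j) x := by
    simpa only [← pow_mul] using
      sum_range_comp_mul_le (fun j => T.pow_apply_nonneg hT j hx) hm n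
  have hcoeff : (m : ℝ) * ((m * n : ℕ) : ℝ)⁻¹ = (n : ℝ)⁻¹ := by
    rw [Nat.cast_mul, mul_inv, ← mul_assoc, mul_inv_cancel₀ (by positivity), one_mul]
  rw [cesaroMean_apply, cesaroMean_apply, smul_smul, hcoeff]
  exact smul_le_smul_of_nonneg_left hsum (by positivity)

theorem tendsto_cesaroMean_pow_of_nonneg [HasSolidNorm E] (hT : ∀ x, 0 ≤ x → 0 ≤ T x)
    (hme : ∀ x, 0 ≤ x → Tendsto (fun n => cesaroMean T n x) atTop (𝓝 0))
    {m : ℕ} (hm : 0 < m) {x : E} (hx : 0 ≤ x) :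
    Tendsto (fun n => cesaroMean (T ^ m) n x) atTop (𝓝 0) := by
  have hsub : Tendsto (fun n => (m : ℝ) • cesaroMean T (m * n) x) atTop (𝓝 0) := by
    simpa using ((hme x hx).comp (tendsto_id.const_mul_atTop' hm)).const_smul (m : ℝ)
  exact tendsto_zero_of_nonneg_of_le
    (fun n => cesaroMean_apply_nonneg (fun y hy => T.pow_apply_nonneg hT m hy) n hx)
    (fun n => cesaroMean_pow_apply_le hT hm n hx) hsub

end CesaroMean

theorem powers_mean_ergodic_of_mean_ergodic_projection_zero
    (E : Type*) [NormedAddCommGroup E] [Lattice E] [IsOrderedAddMonoid E] [HasSolidNorm E] [NormedSpace ℝ E]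
    [PosSMulStrictMono ℝ E]
    (T : E →L[ℝ] E)
    (hpos : ∀ x : E, 0 ≤ x → 0 ≤ T x)
    (hme : ∀ x : E,
      Tendsto (fun n : ℕ => (n : ℝ)⁻¹ • ∑ k ∈ Finset.range n, (T ^ k) x) atTop (nhds 0))
    (m : ℕ) (hm : 1 ≤ m) :
    ∀ x : E,
      Tendsto (fun n : ℕ => (n : ℝ)⁻¹ • ∑ k ∈ Finset.range n, ((T ^ m) ^ k) x) atTop
        (nhds 0) := by
  intro x
  simpa only [cesaroMean_apply] using
    tendsto_apply_of_tendsto_apply_nonneg (cesaroMean (T ^ m))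
      (fun y hy => tendsto_cesaroMean_pow_of_nonneg hpos
        (fun z _ => by simpa only [cesaroMean_apply] using hme z) hm hy) x
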